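/- arXiv:2104.09063 — 3 statements merged into one kernel-verified Lean document; each statement's English description precedes it below -/
import Mathlib

section
/- For any word w over a finite alphabet Σ, ι(w) ≤ ζ(w) ≤ ι(w) + 1, where ζ(w) is the maximal universality index over all conjugates of w. -/
open List

variable {α : Type*}

/-- `w` is `k`-universal: every word of length `k` over the alphabet `α`
is a scattered factor (subsequence) of `w`. -/
def IsUniversal [Fintype α] (k : ℕ) (w : List α) : Prop :=
  ∀ u : List α, u.length = k → u.Sublist w

/-- The universality index `ι(w)`: the largest `k` such that `w` is `k`-universal. -/
noncomputable def univIndex [Fintype α] (w : List α) : ℕ :=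
  sSup {k | IsUniversal k w}

/-- The circular universality index `ζ(w)`: the largest `k` such that some
conjugate of `w` is `k`-universal. -/
noncomputable def circIndex [Fintype α] (w : List α) : ℕ :=
  sSup {k | ∃ u v : List α, w = u ++ v ∧ IsUniversal k (v ++ u)}

/-- `wpow w s = w^s`, the `s`-fold concatenation of `w`. -/
def wpow (w : List α) (s : ℕ) : List α := (List.replicate s w).flatten

/-- Auxiliary (fuelled) computation of the remainder of the arch factorisation:
greedily remove the shortest prefix containing every letter of the alphabet. -/
def remAux [Fintype α] [DecidableEq α] : ℕ → List α → List α
  | 0, w => w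
  | (n+1), w =>
    match (List.range' 1 w.length).find?
        (fun m => decide ((w.take m).toFinset = Finset.univ)) with
    | none => w
    | some m => remAux n (w.drop m)

/-- `rem w = r(w)`, the remainder of the arch factorisation of `w`. -/
def rem [Fintype α] [DecidableEq α] (w : List α) : List α := remAux w.length w

/-- Auxiliary (fuelled) computation of the list of arches of `w`. -/
def archesAux [Fintype α] [DecidableEq α] : ℕ → List α → List (List α)
  | 0, _ => []
  | (n+1), w =>
    match (List.range' 1 w.length).find?
        (fun m => decide ((w.take m).toFinset = Finset.univ)) with
    | none => []
    | some m => (w.take m) :: archesAux n (w.drop m)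

/-- `arches w`: the list `[arch₁(w), …, arch_{ι(w)}(w)]` of arches of `w`. -/
def arches [Fintype α] [DecidableEq α] (w : List α) : List (List α) :=
  archesAux w.length w

/-!
Rotating `w = u ++ v` into `v ++ u` costs at most one in universality. If `v` is not
`m`-universal, some word `x` of length `m` is not a scattered factor of `v`, so in every
embedding of `x ++ y` into `v ++ u` the suffix `y` lands in `u`; hence
`ι(v ++ u) ≤ ι(v) + ι(u) + 1`. On the other hand concatenation is superadditive,
`ι(u) + ι(v) ≤ ι(u ++ v)`, so `ι(v ++ u) ≤ ι(u ++ v) + 1`.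
-/

section

variable [Fintype α]

namespace IsUniversal

theorem zero (w : List α) : IsUniversal 0 w := by
  intro u hu
  rw [length_eq_zero_iff.mp hu]
  exact nil_sublist w

theorem of_isEmpty [IsEmpty α] (k : ℕ) (w : List α) : IsUniversal k w := by
  rintro (_ | ⟨a, _⟩) _
  · exact nil_sublist w
  · exact isEmptyElim a

theorem mono {j k : ℕ} {w : List α} (h : IsUniversal k w) (hjk : j ≤ k) :
    IsUniversal j w := by
  rintro (_ | ⟨a, t⟩) hu
  · exact nil_sublist w
  · refine (sublist_append_left _ (replicate (k - j) a)).trans (h _ ?_)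
    simp only [length_append, length_replicate] at hu ⊢
    omega

theorem length_le [Nonempty α] {k : ℕ} {w : List α} (h : IsUniversal k w) :
    k ≤ w.length := by
  obtain ⟨a⟩ := ‹Nonempty α›
  simpa using (h (replicate k a) length_replicate).length_le

theorem append {p q : ℕ} {u v : List α} (hu : IsUniversal p u) (hv : IsUniversal q v) :
    IsUniversal (p + q) (u ++ v) := by
  intro x hx
  rw [← take_append_drop p x]
  exact (hu _ (by simp [hx])).append (hv _ (by simp [hx]))

theorem right_of_append {m q : ℕ} {u v : List α} (h : IsUniversal (m + q) (v ++ u))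
    (hv : ¬ IsUniversal m v) : IsUniversal q u := by
  obtain ⟨x, hx, hxv⟩ : ∃ x : List α, x.length = m ∧ ¬ x <+ v := by
    simpa [IsUniversal] using hv
  intro y hy
  obtain ⟨s, t, hst, hs, ht⟩ := sublist_append_iff.mp (h (x ++ y) (by simp [hx, hy]))
  rcases append_eq_append_iff.mp hst with ⟨a, rfl, rfl⟩ | ⟨c, rfl, rfl⟩
  · exact absurd ((sublist_append_left x a).trans hs) hxv
  · exact (sublist_append_right c y).trans ht

end IsUniversal

theorem isUniversal_iff_le_univIndex [Nonempty α] {k : ℕ} {w : List α} :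
    IsUniversal k w ↔ k ≤ univIndex w := by
  have hbdd : BddAbove {k | IsUniversal k w} := ⟨w.length, fun _ => IsUniversal.length_le⟩
  refine ⟨fun h => le_csSup hbdd h, fun h => ?_⟩
  exact (Nat.sSup_mem ⟨0, IsUniversal.zero w⟩ hbdd).mono h

theorem isUniversal_univIndex [Nonempty α] (w : List α) : IsUniversal (univIndex w) w :=
  isUniversal_iff_le_univIndex.mpr le_rfl

theorem univIndex_add_le_univIndex_append [Nonempty α] (u v : List α) :
    univIndex u + univIndex v ≤ univIndex (u ++ v) :=
  isUniversal_iff_le_univIndex.mp <| (isUniversal_univIndex u).append (isUniversal_univIndex v)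

theorem univIndex_append_le [Nonempty α] (v u : List α) :
    univIndex (v ++ u) ≤ univIndex v + univIndex u + 1 := by
  rcases le_or_gt (univIndex (v ++ u)) (univIndex v + 1) with hle | hgt
  · omega
  set q := univIndex (v ++ u) - (univIndex v + 1)
  have hvu : IsUniversal (univIndex v + 1 + q) (v ++ u) :=
    isUniversal_iff_le_univIndex.mpr (by omega)
  have hv : ¬ IsUniversal (univIndex v + 1) v := by
    rw [isUniversal_iff_le_univIndex]
    omega
  have hu : q ≤ univIndex u := isUniversal_iff_le_univIndex.mp (hvu.right_of_append hv)
  omega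

theorem IsUniversal.le_univIndex_swap_add_one [Nonempty α] {k : ℕ} {u v : List α}
    (h : IsUniversal k (v ++ u)) : k ≤ univIndex (u ++ v) + 1 :=
  calc k ≤ univIndex (v ++ u) := isUniversal_iff_le_univIndex.mp h
    _ ≤ univIndex v + univIndex u + 1 := univIndex_append_le v u
    _ ≤ univIndex (u ++ v) + 1 := by linarith [univIndex_add_le_univIndex_append u v]

-- Over the empty alphabet every word is `k`-universal for all `k`, and `sSup` of an
-- unbounded subset of `ℕ` is `0`.
theorem univIndex_of_isEmpty [IsEmpty α] (w : List α) : univIndex w = 0 := by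
  refine (csSup_of_not_bddAbove fun ⟨m, hm⟩ => ?_).trans csSup_empty
  exact m.not_succ_le_self (hm (IsUniversal.of_isEmpty (m + 1) w))

theorem circIndex_of_isEmpty [IsEmpty α] (w : List α) : circIndex w = 0 := by
  refine (csSup_of_not_bddAbove fun ⟨m, hm⟩ => ?_).trans csSup_empty
  exact m.not_succ_le_self (hm ⟨[], w, by simp, IsUniversal.of_isEmpty (m + 1) _⟩)

end

theorem univIndex_le_circIndex_le_succ_general [Fintype α] (w : List α) :
    univIndex w ≤ circIndex w ∧ circIndex w ≤ univIndex w + 1 := by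
  cases isEmpty_or_nonempty α
  · simp [univIndex_of_isEmpty, circIndex_of_isEmpty]
  have hbound : ∀ k ∈ {k | ∃ u v : List α, w = u ++ v ∧ IsUniversal k (v ++ u)},
      k ≤ univIndex w + 1 := by
    rintro k ⟨u, v, rfl, h⟩
    exact h.le_univIndex_swap_add_one
  exact ⟨le_csSup ⟨_, hbound⟩ ⟨[], w, rfl, by simpa using isUniversal_univIndex w⟩,
    csSup_le ⟨0, [], w, by simp, IsUniversal.zero _⟩ hbound⟩

theorem univIndex_le_circIndex_le_succ [Fintype α] [DecidableEq α] (w : List α)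
    (halph : w.toFinset = Finset.univ) :
    univIndex w ≤ circIndex w ∧ circIndex w ≤ univIndex w + 1 :=
  univIndex_le_circIndex_le_succ_general w
end

section
/- Let w be a word over Σ with ι(w) ≥ 1 and s ∈ ℕ. Then r(w^s) = r(r(w^{s−1})·w), i.e. the remainder of a power can be computed recursively from the remainder of the previous power. -/
/-!
Arches are split off greedily from the left, and the first arch of `u` is also the first arch
of `u ++ v`. Hence `r(u v) = r(r(u) v)` for all words `u`, `v`, by induction on `|u|`; the
theorem is the case `u = w^(s-1)`, `v = w`.
-/

open List

variable {α : Type*}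

namespace ArchFactorization

variable [Fintype α] [DecidableEq α]

def firstArchLength? (w : List α) : Option ℕ :=
  (List.range' 1 w.length).find? fun m => decide ((w.take m).toFinset = Finset.univ)

lemma firstArchLength?_eq_some_iff {w : List α} {m : ℕ} :
    firstArchLength? w = some m ↔ (w.take m).toFinset = Finset.univ ∧ 1 ≤ m ∧ m ≤ w.length ∧
      ∀ j, 1 ≤ j → j < m → (w.take j).toFinset ≠ Finset.univ := by
  simp only [firstArchLength?, find?_range'_eq_some, decide_eq_true_eq, mem_range'_1,
    Bool.not_eq_eq_eq_not, Bool.not_true, decide_eq_false_iff_not, Nat.add_comm 1,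
    Nat.lt_add_one_iff, and_assoc, ne_eq]

lemma firstArchLength?_append_of_eq_some {u : List α} {m : ℕ} (h : firstArchLength? u = some m)
    (v : List α) : firstArchLength? (u ++ v) = some m := by
  obtain ⟨hcover, hm, hmu, hmin⟩ := firstArchLength?_eq_some_iff.1 h
  refine firstArchLength?_eq_some_iff.2 ⟨?_, hm, ?_, fun j hj hjm => ?_⟩
  · rwa [take_append_of_le_length hmu]
  · rw [length_append]; omega
  · rw [take_append_of_le_length (by omega)]
    exact hmin j hj hjm

lemma remAux_succ_of_eq_none {w : List α} (h : firstArchLength? w = none) (n : ℕ) :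
    remAux (n + 1) w = w := by
  unfold firstArchLength? at h
  rw [remAux, h]

lemma remAux_succ_of_eq_some {w : List α} {m : ℕ} (h : firstArchLength? w = some m) (n : ℕ) :
    remAux (n + 1) w = remAux n (w.drop m) := by
  unfold firstArchLength? at h
  rw [remAux, h]

lemma rem_of_eq_none {w : List α} (h : firstArchLength? w = none) : rem w = w := by
  cases w with
  | nil => rfl
  | cons a t => rw [rem, length_cons, remAux_succ_of_eq_none h]

lemma remAux_eq_rem {n : ℕ} {w : List α} (hw : w.length ≤ n) : remAux n w = rem w := by
  induction n using Nat.strong_induction_on generalizing w with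
  | _ n ih =>
    obtain _ | n := n
    · rw [eq_nil_of_length_eq_zero (Nat.le_zero.1 hw)]; rfl
    cases h : firstArchLength? w with
    | none => rw [remAux_succ_of_eq_none h, rem_of_eq_none h]
    | some m =>
      obtain ⟨-, hm, hmw, -⟩ := firstArchLength?_eq_some_iff.1 h
      obtain ⟨a, t, rfl⟩ := exists_cons_of_ne_nil (ne_nil_of_length_pos (by omega) : w ≠ [])
      have ht : t.length ≤ n := by simpa using hw
      have hdrop : ((a :: t).drop m).length ≤ t.length := by
        rw [length_drop, length_cons]; omega
      rw [remAux_succ_of_eq_some h, rem, length_cons, remAux_succ_of_eq_some h,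
        ih n (by omega) (hdrop.trans ht), ih t.length (by omega) hdrop]

lemma rem_of_eq_some {w : List α} {m : ℕ} (h : firstArchLength? w = some m) :
    rem w = rem (w.drop m) := by
  obtain ⟨-, hm, hmw, -⟩ := firstArchLength?_eq_some_iff.1 h
  obtain ⟨n, hn⟩ : ∃ n, w.length = n + 1 := ⟨w.length - 1, by omega⟩
  rw [rem, hn, remAux_succ_of_eq_some h, remAux_eq_rem (by rw [length_drop]; omega)]

theorem rem_rem_append (u v : List α) : rem (rem u ++ v) = rem (u ++ v) := by
  cases h : firstArchLength? u with
  | none => rw [rem_of_eq_none h]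
  | some m =>
    obtain ⟨-, hm, hmu, -⟩ := firstArchLength?_eq_some_iff.1 h
    have : (u.drop m).length < u.length := by rw [length_drop]; omega
    rw [rem_of_eq_some h, rem_of_eq_some (firstArchLength?_append_of_eq_some h v),
      drop_append_of_le_length hmu, rem_rem_append (u.drop m) v]
termination_by u.length

end ArchFactorization

lemma wpow_succ (w : List α) (s : ℕ) : wpow w (s + 1) = wpow w s ++ w := by
  simp [wpow, replicate_succ']

open ArchFactorization in
theorem rem_pow_rec_general [Fintype α] [DecidableEq α] (w : List α)
    (s : ℕ) (hs : 1 ≤ s) :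
    rem (wpow w s) = rem (rem (wpow w (s - 1)) ++ w) := by
  obtain ⟨t, rfl⟩ : ∃ t, s = t + 1 := ⟨s - 1, by omega⟩
  rw [Nat.add_sub_cancel, wpow_succ, rem_rem_append]

theorem rem_pow_rec [Fintype α] [DecidableEq α] (w : List α)
    (hw : 1 ≤ univIndex w) (s : ℕ) (hs : 1 ≤ s) :
    rem (wpow w s) = rem (rem (wpow w (s - 1)) ++ w) :=
  rem_pow_rec_general w s hs
end

section
/- Let w be a word over Σ with ι(w) ≥ 1, and let s, t ∈ ℕ₀. If alph(r(w^s)) = alph(r(w^t)) then r(w^{s+i}) = r(w^{t+i}) for all i ≥ 1. -/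
open List

variable {α : Type*}

/-!
Cutting off an arch never looks past its end, so `r(x y) = r(r(x) y)` and hence
`r(w^(s+i)) = r(r(w^s) w^i)`. The word `r(w^s)` contains no arch while `w^i` (for `i ≥ 1`)
contains every letter, so the first arch of `r(w^s) w^i` ends inside `w^i`, at the first
position where the letters read so far in `w^i` together with `alph(r(w^s))` exhaust the
alphabet. That position depends on `r(w^s)` only through its alphabet, and what follows it
is the same suffix of `w^i` for `s` and for `t`.
-/

theorem wpow_add (w : List α) (a b : ℕ) : wpow w (a + b) = wpow w a ++ wpow w b := by
  simp only [wpow, replicate_add, flatten_append]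

theorem mem_wpow {w : List α} {i : ℕ} {a : α} : a ∈ wpow w i ↔ i ≠ 0 ∧ a ∈ w := by
  simp [wpow]

theorem mem_of_one_le_univIndex [Fintype α] {w : List α} (hw : 1 ≤ univIndex w) (a : α) :
    a ∈ w := by
  have hbdd : BddAbove {k | IsUniversal k w} :=
    ⟨w.length, fun k hk => by simpa using (hk (replicate k a) length_replicate).length_le⟩
  have huniv : IsUniversal (univIndex w) w :=
    Nat.sSup_mem ⟨0, fun u hu => by simp [length_eq_zero_iff.mp hu]⟩ hbdd
  exact (huniv (replicate (univIndex w) a) length_replicate).subset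
    (mem_replicate.mpr ⟨by omega, rfl⟩)

theorem toFinset_take_length_add_append [DecidableEq α] (u y : List α) (j : ℕ) :
    ((u ++ y).take (u.length + j)).toFinset = u.toFinset ∪ (y.take j).toFinset := by
  rw [take_length_add_append, toFinset_append]

section ArchFactorization

variable [Fintype α] [DecidableEq α]

def firstArchEnd (w : List α) : Option ℕ :=
  (range' 1 w.length).find? fun m => decide ((w.take m).toFinset = Finset.univ)

theorem firstArchEnd_eq_some_iff {w : List α} {m : ℕ} :
    firstArchEnd w = some m ↔ 1 ≤ m ∧ m ≤ w.length ∧ (w.take m).toFinset = Finset.univ ∧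
      ∀ k, 1 ≤ k → k < m → (w.take k).toFinset ≠ Finset.univ := by
  simp only [firstArchEnd, find?_range'_eq_some, decide_eq_true_eq, mem_range'_1]
  constructor
  · rintro ⟨hfull, ⟨h1, h2⟩, hmin⟩
    exact ⟨h1, by omega, hfull, fun k hk hkm => by simpa using hmin k hk hkm⟩
  · rintro ⟨h1, h2, hfull, hmin⟩
    exact ⟨hfull, ⟨h1, by omega⟩, fun k hk hkm => by simpa using hmin k hk hkm⟩

theorem length_drop_lt_of_firstArchEnd_eq_some {w : List α} {m : ℕ}
    (h : firstArchEnd w = some m) : (w.drop m).length < w.length := by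
  obtain ⟨h1, h2, -⟩ := firstArchEnd_eq_some_iff.mp h
  rw [length_drop]
  omega

theorem firstArchEnd_eq_none_iff {w : List α} :
    firstArchEnd w = none ↔
      ∀ k, 1 ≤ k → k ≤ w.length → (w.take k).toFinset ≠ Finset.univ := by
  simp only [firstArchEnd, find?_range'_eq_none, Bool.not_eq_true', decide_eq_false_iff_not,
    Nat.lt_one_add_iff]

theorem eq_nil_of_firstArchEnd_eq_none {w : List α} (h : firstArchEnd w = none)
    (hw : w.toFinset = Finset.univ) : w = [] := by
  by_contra hne
  exact firstArchEnd_eq_none_iff.mp h w.length (length_pos_iff.mpr hne) le_rfl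
    (by rwa [take_length])

theorem remAux_succ_of_firstArchEnd_eq_none {w : List α} (h : firstArchEnd w = none) (n : ℕ) :
    remAux (n + 1) w = w := by
  rw [firstArchEnd] at h
  rw [remAux, h]

theorem remAux_succ_of_firstArchEnd_eq_some {w : List α} {m : ℕ} (h : firstArchEnd w = some m)
    (n : ℕ) : remAux (n + 1) w = remAux n (w.drop m) := by
  rw [firstArchEnd] at h
  rw [remAux, h]

theorem remAux_eq_remAux_of_length_le {n n' : ℕ} {w : List α} (hn : w.length ≤ n)
    (hn' : w.length ≤ n') : remAux n w = remAux n' w := by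
  induction n generalizing n' w with
  | zero => obtain rfl : w = [] := length_eq_zero_iff.mp (by omega); cases n' <;> rfl
  | succ n ih =>
    obtain _ | n' := n'
    · obtain rfl : w = [] := length_eq_zero_iff.mp (by omega); rfl
    cases h : firstArchEnd w with
    | none => rw [remAux_succ_of_firstArchEnd_eq_none h, remAux_succ_of_firstArchEnd_eq_none h]
    | some m =>
      have := length_drop_lt_of_firstArchEnd_eq_some h
      rw [remAux_succ_of_firstArchEnd_eq_some h, remAux_succ_of_firstArchEnd_eq_some h]
      exact ih (by omega) (by omega)

theorem rem_of_firstArchEnd_eq_none {w : List α} (h : firstArchEnd w = none) : rem w = w := by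
  rw [rem, remAux_eq_remAux_of_length_le le_rfl (Nat.le_succ _),
    remAux_succ_of_firstArchEnd_eq_none h]

theorem rem_of_firstArchEnd_eq_some {w : List α} {m : ℕ} (h : firstArchEnd w = some m) :
    rem w = rem (w.drop m) := by
  rw [rem, remAux_eq_remAux_of_length_le le_rfl (Nat.le_succ _),
    remAux_succ_of_firstArchEnd_eq_some h, rem]
  exact remAux_eq_remAux_of_length_le (by simp) (by simp)

theorem firstArchEnd_rem (w : List α) : firstArchEnd (rem w) = none := by
  cases h : firstArchEnd w with
  | none => rwa [rem_of_firstArchEnd_eq_none h]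
  | some m => rw [rem_of_firstArchEnd_eq_some h]; exact firstArchEnd_rem (w.drop m)
termination_by w.length
decreasing_by exact length_drop_lt_of_firstArchEnd_eq_some h

theorem firstArchEnd_append_of_eq_some {x : List α} {m : ℕ} (h : firstArchEnd x = some m)
    (y : List α) : firstArchEnd (x ++ y) = some m := by
  obtain ⟨h1, h2, hfull, hmin⟩ := firstArchEnd_eq_some_iff.mp h
  refine firstArchEnd_eq_some_iff.mpr ⟨h1, by simp; omega, ?_, fun k hk hkm => ?_⟩
  · rwa [take_append_of_le_length h2]
  · rw [take_append_of_le_length (by omega)]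
    exact hmin k hk hkm

theorem rem_rem_append (x y : List α) : rem (rem x ++ y) = rem (x ++ y) := by
  cases h : firstArchEnd x with
  | none => rw [rem_of_firstArchEnd_eq_none h]
  | some m =>
    have hm := (firstArchEnd_eq_some_iff.mp h).2.1
    rw [rem_of_firstArchEnd_eq_some (firstArchEnd_append_of_eq_some h y),
      rem_of_firstArchEnd_eq_some h, drop_append_of_le_length hm, rem_rem_append (x.drop m) y]
termination_by x.length
decreasing_by exact length_drop_lt_of_firstArchEnd_eq_some h

theorem length_lt_of_firstArchEnd_append {u y : List α} {n : ℕ} (hu : firstArchEnd u = none)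
    (h : firstArchEnd (u ++ y) = some n) : u.length < n := by
  obtain ⟨h1, -, hfull, -⟩ := firstArchEnd_eq_some_iff.mp h
  by_contra! hn
  rw [take_append_of_le_length hn] at hfull
  exact firstArchEnd_eq_none_iff.mp hu n h1 hn hfull

theorem firstArchEnd_append_eq_some_iff {u y : List α} {m : ℕ} (hu : firstArchEnd u = none)
    (hm : 1 ≤ m) :
    firstArchEnd (u ++ y) = some (u.length + m) ↔ m ≤ y.length ∧
      u.toFinset ∪ (y.take m).toFinset = Finset.univ ∧
      ∀ j, 1 ≤ j → j < m → u.toFinset ∪ (y.take j).toFinset ≠ Finset.univ := by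
  rw [firstArchEnd_eq_some_iff, toFinset_take_length_add_append, length_append]
  constructor
  · rintro ⟨-, hlen, hfull, hmin⟩
    refine ⟨by omega, hfull, fun j hj hjm => ?_⟩
    rw [← toFinset_take_length_add_append]
    exact hmin _ (by omega) (by omega)
  · rintro ⟨hlen, hfull, hmin⟩
    refine ⟨by omega, by omega, hfull, fun k hk hkm => ?_⟩
    rcases le_or_gt k u.length with hku | hku
    · rw [take_append_of_le_length hku]
      exact firstArchEnd_eq_none_iff.mp hu k hk hku
    · obtain ⟨j, rfl⟩ := Nat.exists_eq_add_of_le hku.le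
      rw [toFinset_take_length_add_append]
      exact hmin _ (by omega) (by omega)

theorem rem_append_eq_of_toFinset_eq {u u' y : List α} (hu : firstArchEnd u = none)
    (hu' : firstArchEnd u' = none) (huu' : u.toFinset = u'.toFinset)
    (hy : (u ++ y).toFinset = Finset.univ) : rem (u ++ y) = rem (u' ++ y) := by
  cases h : firstArchEnd (u ++ y) with
  | none =>
    -- a word containing every letter but no arch is empty: the alphabet is empty
    obtain ⟨rfl, rfl⟩ := append_eq_nil_iff.mp (eq_nil_of_firstArchEnd_eq_none h hy)
    rw [toFinset_nil, eq_comm, toFinset_eq_empty_iff] at huu'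
    rw [huu']
  | some n =>
    have hlt := length_lt_of_firstArchEnd_append hu h
    obtain ⟨m, rfl⟩ := Nat.exists_eq_add_of_le hlt.le
    have hm : 1 ≤ m := by omega
    have h' : firstArchEnd (u' ++ y) = some (u'.length + m) := by
      rwa [firstArchEnd_append_eq_some_iff hu' hm, ← huu',
        ← firstArchEnd_append_eq_some_iff hu hm]
    rw [rem_of_firstArchEnd_eq_some h, rem_of_firstArchEnd_eq_some h', drop_length_add_append,
      drop_length_add_append]

end ArchFactorization

theorem rem_pow_eventually_periodic [Fintype α] [DecidableEq α] (w : List α)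
    (hw : 1 ≤ univIndex w) (s t : ℕ)
    (h : (rem (wpow w s)).toFinset = (rem (wpow w t)).toFinset) :
    ∀ i : ℕ, 1 ≤ i → rem (wpow w (s + i)) = rem (wpow w (t + i)) := by
  intro i hi
  have hfull : (rem (wpow w s) ++ wpow w i).toFinset = Finset.univ :=
    Finset.eq_univ_of_forall fun a => by
      simp [mem_wpow, mem_of_one_le_univIndex hw a, Nat.one_le_iff_ne_zero.mp hi]
  rw [wpow_add, wpow_add, ← rem_rem_append (wpow w s), ← rem_rem_append (wpow w t)]
  exact rem_append_eq_of_toFinset_eq (firstArchEnd_rem _) (firstArchEnd_rem _) h hfull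
end
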